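/- Let k ≥ 2, n ≥ 3, and consider the graph P_k □ C_n with vertex set {(i,j) : 1 ≤ i ≤ k, j ∈ ℤ_n}. For every fixed j ∈ ℤ_n, the diagonal sequence of vertices (1, j), (2, j+1), (3, j+2), …, (k, j+k−1) (second coordinates taken modulo n) is a neighbourhood chain of Type 1 (NC-T1) of length k in P_k □ C_n. -/
import Mathlib


/-- The open neighborhood of `u` in `G`, as a `Finset`. -/
noncomputable def nbr {V : Type*} [Fintype V] (G : SimpleGraph V) (u : V) : Finset V :=
  (G.neighborSet u).toFinite.toFinset

/-- `f` is a distance magic labeling of `G`: a bijection from the vertex set onto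
`{1, …, |V(G)|}` whose neighbor sums are all equal. -/
def IsDistanceMagicLabeling {V : Type*} [Fintype V] (G : SimpleGraph V) (f : V → ℕ) : Prop :=
  Set.BijOn f Set.univ (Set.Icc 1 (Fintype.card V)) ∧
    ∃ S : ℕ, ∀ u : V, ∑ v ∈ nbr G u, f v = S

/-- `G` is distance magic if it admits a distance magic labeling. -/
def IsDistanceMagic {V : Type*} [Fintype V] (G : SimpleGraph V) : Prop :=
  ∃ f : V → ℕ, IsDistanceMagicLabeling G f

/-- `u 1, u 2, …, u k` (1-based indexing) is a neighbourhood chain of Type 1 (NC-T1)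
of length `k` in `G`, with `N i := G.neighborSet (u i)`, `N 1 \ N 2 = {v₁}` and
`N k \ N (k-1) = {vₖ}`. -/
def IsNCT1 {V : Type*} (G : SimpleGraph V) (k : ℕ) (u : ℕ → V) (v₁ vₖ : V) : Prop :=
  2 ≤ k ∧
  -- (1) consecutive neighborhoods meet
  (∀ i, 1 ≤ i → i + 1 ≤ k → (G.neighborSet (u i) ∩ G.neighborSet (u (i + 1))).Nonempty) ∧
  -- (2) non-consecutive neighborhoods are disjoint, except possibly the pair (N 1, N k)
  (∀ i j, 1 ≤ i → i + 2 ≤ j → j ≤ k → ¬(i = 1 ∧ j = k) →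
    G.neighborSet (u i) ∩ G.neighborSet (u j) = ∅) ∧
  -- (3) the two end differences are singletons, with distinct elements
  G.neighborSet (u 1) \ G.neighborSet (u 2) = {v₁} ∧
  G.neighborSet (u k) \ G.neighborSet (u (k - 1)) = {vₖ} ∧
  v₁ ≠ vₖ ∧
  -- (4) forward differences are contained in the next neighborhood
  (∀ i, 1 ≤ i → i + 2 ≤ k → G.neighborSet (u (i + 1)) \ G.neighborSet (u i) ⊆
    G.neighborSet (u (i + 2))) ∧
  -- (5) consecutive differences are nonempty
  (∀ i, 1 ≤ i → i + 1 ≤ k →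
    (G.neighborSet (u i) \ G.neighborSet (u (i + 1))).Nonempty ∧
    (G.neighborSet (u (i + 1)) \ G.neighborSet (u i)).Nonempty)

/-- Two NC-T1 chains `N 1 ⋯ N k` (neighborhoods of `u 1, …, u k`) and
`N (k+1) ⋯ N (2k)` (neighborhoods of `w 1, …, w k`) form a Type-2 neighbourhood
chain (NC-T2). -/
def IsNCT2 {V : Type*} (G : SimpleGraph V) (k : ℕ) (u w : ℕ → V) (a b c d : V) : Prop :=
  IsNCT1 G k u a b ∧ IsNCT1 G k w c d ∧
  -- (i)
  G.neighborSet (u 1) ∩ G.neighborSet (u 2) ∩ G.neighborSet (w 1) =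
    G.neighborSet (w 1) \ G.neighborSet (w 2) ∧
  (G.neighborSet (w 1) \ G.neighborSet (w 2)).Nonempty ∧
  G.neighborSet (u k) ∩ G.neighborSet (w k) ∩ G.neighborSet (w (k - 1)) =
    G.neighborSet (u k) \ G.neighborSet (u (k - 1)) ∧
  (G.neighborSet (u k) \ G.neighborSet (u (k - 1))).Nonempty ∧
  -- (ii)
  (∀ i, 2 ≤ i → i ≤ k - 1 →
    (G.neighborSet (u i) ∩ G.neighborSet (u (i + 1)) ∩ G.neighborSet (w i) ∩
      G.neighborSet (w (i - 1))).Nonempty)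

/-- The cylindrical grid graph `P_m □ C_n`: vertices are pairs `(i, j)` with `i` a row
index (path coordinate) and `j ∈ ZMod n` (cycle coordinate); `(i,j)` and `(i',j')` are
adjacent iff `i = i'` and `j - j' ≡ ±1 (mod n)`, or `j = j'` and `|i - i'| = 1`. -/
def PC (m n : ℕ) : SimpleGraph (Fin m × ZMod n) :=
  SimpleGraph.fromRel (fun p q =>
    (p.1 = q.1 ∧ (p.2 - q.2 = 1 ∨ q.2 - p.2 = 1)) ∨
    (p.2 = q.2 ∧ (p.1.val + 1 = q.1.val ∨ q.1.val + 1 = p.1.val)))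


section Aux

lemma two_ne_zmod {n : ℕ} (hn : 3 ≤ n) : (2 : ZMod n) ≠ 0 := by
  intro h
  haveI : NeZero n := ⟨by omega⟩
  have h2 : ((2:ℕ) : ZMod n) = 0 := by exact_mod_cast h
  rw [ZMod.natCast_eq_zero_iff] at h2
  have := Nat.le_of_dvd (by norm_num) h2
  omega

lemma PC_adj_iff {k n : ℕ} (hn : 3 ≤ n) (r s : Fin k) (c d : ZMod n) :
    (PC k n).Adj (r, c) (s, d) ↔
      (s.val = r.val ∧ (d = c + 1 ∨ d = c - 1)) ∨
        (d = c ∧ (s.val = r.val + 1 ∨ r.val = s.val + 1)) := by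
  haveI : Fact (1 < n) := ⟨by omega⟩
  have key : ∀ a b : ZMod n, a - b = 1 ↔ b = a - 1 := by
    intro a b
    constructor
    · intro h; linear_combination -h
    · intro h; linear_combination -h
  simp only [PC, SimpleGraph.fromRel_adj]
  constructor
  · rintro ⟨hne, h | h⟩
    · rcases h with ⟨h1, h2 | h2⟩ | ⟨h1, h2⟩
      · exact Or.inl ⟨by rw [h1], Or.inr ((key c d).mp h2)⟩
      · exact Or.inl ⟨by rw [h1], Or.inl (by linear_combination h2)⟩
      · exact Or.inr ⟨h1.symm, by omega⟩
    · rcases h with ⟨h1, h2 | h2⟩ | ⟨h1, h2⟩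
      · exact Or.inl ⟨by rw [h1], Or.inl (by linear_combination h2)⟩
      · exact Or.inl ⟨by rw [h1], Or.inr ((key c d).mp h2)⟩
      · exact Or.inr ⟨h1, by omega⟩
  · rintro (⟨h1, h2 | h2⟩ | ⟨h1, h2⟩)
    · refine ⟨?_, Or.inl (Or.inl ⟨Fin.ext h1.symm, Or.inr (by linear_combination h2)⟩)⟩
      intro hx
      have : c = d := (Prod.mk.injEq .. ▸ hx).2
      rw [h2, left_eq_add] at this
      exact one_ne_zero this
    · refine ⟨?_, Or.inl (Or.inl ⟨Fin.ext h1.symm, Or.inl ((key c d).mpr h2)⟩)⟩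
      intro hx
      have : c = d := (Prod.mk.injEq .. ▸ hx).2
      rw [h2] at this
      exact one_ne_zero (by linear_combination this)
    · refine ⟨?_, Or.inl (Or.inr ⟨h1.symm, by omega⟩)⟩
      intro hx
      have : r = s := (Prod.mk.injEq .. ▸ hx).1
      have := congrArg Fin.val this
      omega

/-- The column of the `i`-th diagonal vertex. -/
def dcol (n : ℕ) (j : ZMod n) (i : ℕ) : ZMod n := j + ((i - 1 : ℕ) : ZMod n)

lemma dcol_succ (n : ℕ) (j : ZMod n) (i : ℕ) (h : 1 ≤ i) :
    dcol n j (i + 1) = dcol n j i + 1 := by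
  unfold dcol
  rw [show i + 1 - 1 = (i - 1) + 1 from by omega]
  push_cast
  ring

lemma mem_diag_nbhd {k n : ℕ} (hn : 3 ≤ n) (j : ZMod n) (i : ℕ) (h1 : 1 ≤ i)
    (h2 : i ≤ k) (x : Fin k × ZMod n) :
    x ∈ (PC k n).neighborSet ((⟨i - 1, by omega⟩ : Fin k), dcol n j i) ↔
      ((x.1.val = i - 1 ∧ (x.2 = dcol n j i + 1 ∨ x.2 = dcol n j i - 1)) ∨
       (x.2 = dcol n j i ∧ (x.1.val = i - 1 + 1 ∨ i - 1 = x.1.val + 1))) := by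
  obtain ⟨s, d⟩ := x
  rw [SimpleGraph.mem_neighborSet, PC_adj_iff hn]

end Aux


/-- For `k ≥ 2`, `n ≥ 3` and any fixed `j ∈ ZMod n`, the diagonal sequence
`(1, j), (2, j+1), …, (k, j+k-1)` (rows written 0-based as `Fin k`, so the `i`-th term,
`1 ≤ i ≤ k`, is `(⟨i-1⟩, j + (i-1))`) is an NC-T1 of length `k` in `P_k □ C_n`. -/
theorem diagonal_is_NCT1 (k n : ℕ) (hk : 2 ≤ k) (hn : 3 ≤ n) (j : ZMod n) :
    ∃ v₁ vₖ : Fin k × ZMod n,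
      IsNCT1 (PC k n) k
        (fun i => (⟨(i - 1) % k, Nat.mod_lt _ (by omega)⟩, j + ((i - 1 : ℕ) : ZMod n)))
        v₁ vₖ := by
  haveI : Fact (1 < n) := ⟨by omega⟩
  have h2z : (2 : ZMod n) ≠ 0 := two_ne_zmod hn
  have hAk : ∀ a : ZMod n, a + 1 ≠ a - 1 := fun a h => h2z (by linear_combination h)
  have hBk : ∀ a : ZMod n, a - 1 ≠ a + 1 := fun a h => h2z (by linear_combination -h)
  have hU : ∀ (i : ℕ) (hi1 : 1 ≤ i) (hi2 : i ≤ k),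
      ((⟨(i - 1) % k, Nat.mod_lt _ (by omega)⟩ : Fin k), j + ((i - 1 : ℕ) : ZMod n)) =
        ((⟨i - 1, by omega⟩ : Fin k), dcol n j i) := by
    intro i h1 h2
    exact Prod.ext (Fin.ext (Nat.mod_eq_of_lt (by omega))) rfl
  have hmem : ∀ (i : ℕ) (hi1 : 1 ≤ i) (hi2 : i ≤ k) (x : Fin k × ZMod n),
      x ∈ (PC k n).neighborSet
          ((⟨(i - 1) % k, Nat.mod_lt _ (by omega)⟩ : Fin k), j + ((i - 1 : ℕ) : ZMod n)) ↔
        ((x.1.val = i - 1 ∧ (x.2 = dcol n j i + 1 ∨ x.2 = dcol n j i - 1)) ∨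
         (x.2 = dcol n j i ∧ (x.1.val = i - 1 + 1 ∨ i - 1 = x.1.val + 1))) := by
    intro i h1 h2 x
    rw [hU i h1 h2]
    exact mem_diag_nbhd hn j i h1 h2 x
  have hc : ∀ i : ℕ, 1 ≤ i → dcol n j (i + 1) = dcol n j i + 1 := dcol_succ n j
  have hd1 : dcol n j 1 = j := by simp [dcol]
  have hck : dcol n j (k - 1) = dcol n j k - 1 := by
    have h := hc (k - 1) (by omega)
    rw [show k - 1 + 1 = k from by omega] at h
    rw [h]; ring
  refine ⟨(⟨0, by omega⟩, j - 1), (⟨k - 1, by omega⟩, dcol n j k + 1),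
    hk, ?_, ?_, ?_, ?_, ?_, ?_, ?_⟩
  · -- (1)
    intro i h1 h2
    refine ⟨(⟨i - 1, by omega⟩, dcol n j i + 1), ?_, ?_⟩
    · exact (hmem i h1 (by omega) _).mpr (Or.inl ⟨rfl, Or.inl rfl⟩)
    · exact (hmem (i + 1) (by omega) h2 _).mpr
        (Or.inr ⟨(hc i h1).symm, Or.inr (show i + 1 - 1 = (i - 1) + 1 from by omega)⟩)
  · -- (2)
    intro i j' h1 h2 h3 _
    rw [Set.eq_empty_iff_forall_notMem]
    intro x hx
    obtain ⟨hxi, hxj⟩ := hx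
    replace hxi := (hmem i h1 (by omega) x).mp hxi
    replace hxj := (hmem j' (by omega) h3 x).mp hxj
    rcases hxi with ⟨hri, _⟩ | ⟨hcoli, hri⟩ <;> rcases hxj with ⟨hrj, _⟩ | ⟨hcolj, hrj⟩
    · omega
    · rcases hrj with h | h <;> omega
    · rcases hri with h | h <;> omega
    · rcases hri with hri | hri <;> rcases hrj with hrj | hrj
      · omega
      · have hj2 : j' = i + 2 := by omega
        subst hj2
        have he := hcoli.symm.trans hcolj
        rw [hc (i + 1) (by omega), hc i h1] at he
        exact h2z (by linear_combination (-1 : ZMod n) * he)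
      · omega
      · omega
  · -- (3a)
    ext x
    constructor
    · rintro ⟨hx1, hx2⟩
      replace hx1 := (hmem 1 (by omega) (by omega) x).mp hx1
      rcases hx1 with ⟨hr, hcol | hcol⟩ | ⟨hcol, hr | hr⟩
      · exact absurd ((hmem 2 (by omega) hk x).mpr
          (Or.inr ⟨by rw [hc 1 le_rfl]; exact hcol, Or.inr (by omega)⟩)) hx2
      · exact Prod.ext (Fin.ext (show x.1.val = 0 from by omega)) (by rw [hcol, hd1])
      · exact absurd ((hmem 2 (by omega) hk x).mpr
          (Or.inl ⟨by omega, Or.inr (by rw [hcol, hc 1 le_rfl, hd1]; ring)⟩)) hx2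
      · exact absurd hr (by omega)
    · intro hx
      rw [Set.mem_singleton_iff] at hx
      subst hx
      constructor
      · exact (hmem 1 (by omega) (by omega) _).mpr
          (Or.inl ⟨rfl, Or.inr (by rw [hd1])⟩)
      · intro hmm
        rcases (hmem 2 (by omega) hk _).mp hmm with ⟨hr, _⟩ | ⟨hcol, _⟩
        · exact absurd (show (0 : ℕ) = 2 - 1 from hr) (by omega)
        · rw [hc 1 le_rfl, hd1] at hcol
          exact hBk j hcol
  · -- (3b)
    ext x
    constructor
    · rintro ⟨hx1, hx2⟩
      replace hx1 := (hmem k (by omega) le_rfl x).mp hx1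
      rcases hx1 with ⟨hr, hcol | hcol⟩ | ⟨hcol, hr | hr⟩
      · exact Prod.ext (Fin.ext hr) hcol
      · exact absurd ((hmem (k - 1) (by omega) (by omega) x).mpr
          (Or.inr ⟨by rw [hcol, hck], Or.inl (by omega)⟩)) hx2
      · exact absurd hr (by have := x.1.isLt; omega)
      · exact absurd ((hmem (k - 1) (by omega) (by omega) x).mpr
          (Or.inl ⟨by omega, Or.inl (by rw [hcol, hck]; ring)⟩)) hx2
    · intro hx
      rw [Set.mem_singleton_iff] at hx
      subst hx
      constructor
      · exact (hmem k (by omega) le_rfl _).mpr (Or.inl ⟨rfl, Or.inl rfl⟩)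
      · intro hmm
        rcases (hmem (k - 1) (by omega) (by omega) _).mp hmm with ⟨hr, _⟩ | ⟨hcol, _⟩
        · exact absurd (show k - 1 = k - 1 - 1 from hr) (by omega)
        · rw [hck] at hcol
          exact hAk _ hcol
  · -- v₁ ≠ vₖ
    intro h
    simp only [Prod.mk.injEq, Fin.mk.injEq] at h
    omega
  · -- (4)
    intro i h1 h2 x hx
    obtain ⟨hx1, hx2⟩ := hx
    replace hx1 := (hmem (i + 1) (by omega) (by omega) x).mp hx1
    refine (hmem (i + 2) (by omega) h2 x).mpr ?_
    have hc1 := hc i h1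
    have hc2 := hc (i + 1) (by omega)
    rcases hx1 with ⟨hr, hcol | hcol⟩ | ⟨hcol, hr | hr⟩
    · exact Or.inr ⟨by rw [hcol, hc2], Or.inr (by omega)⟩
    · exact absurd ((hmem i h1 (by omega) x).mpr
        (Or.inr ⟨by rw [hcol, hc1]; ring, Or.inl (by omega)⟩)) hx2
    · exact Or.inl ⟨by omega, Or.inr (by rw [hcol, hc2]; ring)⟩
    · exact absurd ((hmem i h1 (by omega) x).mpr
        (Or.inl ⟨by omega, Or.inl (by rw [hcol, hc1])⟩)) hx2
  · -- (5)
    intro i h1 h2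
    have hc1 := hc i h1
    constructor
    · refine ⟨(⟨i - 1, by omega⟩, dcol n j i - 1),
        (hmem i h1 (by omega) _).mpr (Or.inl ⟨rfl, Or.inr rfl⟩), ?_⟩
      intro hmm
      rcases (hmem (i + 1) (by omega) h2 _).mp hmm with ⟨hr, _⟩ | ⟨hcol, _⟩
      · exact absurd (show i - 1 = i + 1 - 1 from hr) (by omega)
      · rw [hc1] at hcol
        exact hBk _ hcol
    · refine ⟨(⟨i, by omega⟩, dcol n j i + 1 + 1),
        (hmem (i + 1) (by omega) h2 _).mpr
          (Or.inl ⟨show i = i + 1 - 1 from by omega, Or.inl (by rw [hc1])⟩), ?_⟩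
      intro hmm
      rcases (hmem i h1 (by omega) _).mp hmm with ⟨hr, _⟩ | ⟨hcol, _⟩
      · exact absurd (show i = i - 1 from hr) (by omega)
      · exact h2z (by linear_combination hcol)
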